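/- For every n : ℕ and every family α : Fin n → Ordinal: (i) the Hessenberg natural sum α 0 ♯ α 1 ♯ ⋯ ♯ α (n−1) is a mixed sum of the family (α i); and (ii) every ordinal γ that is a mixed sum of (α i) satisfies γ ≤ α 0 ♯ α 1 ♯ ⋯ ♯ α (n−1). Hence the Hessenberg natural sum of finitely many ordinals is their largest mixed sum. -/

import Mathlib

universe u

namespace Ordinal

/-- The natural (Hessenberg) sum of two ordinals, as defined in Mathlib (December 2024),
where it was `Ordinal.nadd` (notation `♯` in `NaturalOps`). -/
noncomputable def nadd : Ordinal.{u} → Ordinal.{u} → Ordinal.{u}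
  | a, b =>
    max (blsub.{u, u} a fun a' _ => nadd a' b) (blsub.{u, u} b fun b' _ => nadd a b')
termination_by a b => (a, b)
decreasing_by
  all_goals first
    | exact Prod.Lex.left _ _ ‹_›
    | exact Prod.Lex.right _ ‹_›

end Ordinal

/-- The order type of a set of ordinals, with the order inherited from the ordinals.
(It lives one universe higher, since `Set Ordinal` does.) -/
noncomputable def otype (A : Set Ordinal.{0}) : Ordinal.{1} :=
  Ordinal.type (Subrel ((· < ·) : Ordinal.{0} → Ordinal.{0} → Prop) (· ∈ A))

/-- `γ` is a mixed sum of the family `α : I → Ordinal` if `{ξ | ξ < γ}` can be partitioned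
into pairwise disjoint sets `A i` such that `A i` has order type `α i` for each `i`. -/
def IsMixedSum {I : Type} (γ : Ordinal.{0}) (α : I → Ordinal.{0}) : Prop :=
  ∃ A : I → Set Ordinal.{0},
    (∀ i j, i ≠ j → Disjoint (A i) (A j)) ∧
    (⋃ i, A i) = Set.Iio γ ∧
    ∀ i, otype (A i) = Ordinal.lift.{1} (α i)

/-- The Hessenberg natural sum of a finite family of ordinals. -/
noncomputable def natFinSum (n : ℕ) (α : Fin n → Ordinal.{0}) : Ordinal.{0} :=
  (List.ofFn α).foldr Ordinal.nadd 0

notation:65 lhs:65 " ♯ " rhs:66 => Ordinal.nadd lhs rhs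

namespace Ordinal

theorem nadd_def (a b : Ordinal.{u}) :
    a ♯ b = max (blsub.{u, u} a fun a' _ => a' ♯ b) (blsub.{u, u} b fun b' _ => a ♯ b') := by
  rw [nadd]

theorem lt_nadd_iff {a b c : Ordinal.{u}} :
    a < b ♯ c ↔ (∃ b' < b, a ≤ b' ♯ c) ∨ ∃ c' < c, a ≤ b ♯ c' := by
  rw [nadd_def]
  simp [lt_blsub_iff]

theorem nadd_le_iff {a b c : Ordinal.{u}} :
    b ♯ c ≤ a ↔ (∀ b' < b, b' ♯ c < a) ∧ ∀ c' < c, b ♯ c' < a := by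
  rw [nadd_def]
  simp [blsub_le_iff]

theorem nadd_lt_nadd_left {b c : Ordinal.{u}} (h : b < c) (a : Ordinal.{u}) : a ♯ b < a ♯ c :=
  lt_nadd_iff.2 (Or.inr ⟨b, h, le_rfl⟩)

theorem nadd_lt_nadd_right {b c : Ordinal.{u}} (h : b < c) (a : Ordinal.{u}) : b ♯ a < c ♯ a :=
  lt_nadd_iff.2 (Or.inl ⟨b, h, le_rfl⟩)

theorem nadd_le_nadd_left {b c : Ordinal.{u}} (h : b ≤ c) (a : Ordinal.{u}) : a ♯ b ≤ a ♯ c := by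
  rcases h.lt_or_eq with h | rfl
  · exact (nadd_lt_nadd_left h a).le
  · exact le_rfl

theorem nadd_le_nadd_right {b c : Ordinal.{u}} (h : b ≤ c) (a : Ordinal.{u}) : b ♯ a ≤ c ♯ a := by
  rcases h.lt_or_eq with h | rfl
  · exact (nadd_lt_nadd_right h a).le
  · exact le_rfl

theorem nadd_le_nadd {a b c d : Ordinal.{u}} (h₁ : a ≤ b) (h₂ : c ≤ d) : a ♯ c ≤ b ♯ d :=
  (nadd_le_nadd_left h₂ a).trans (nadd_le_nadd_right h₁ d)

theorem nadd_comm : ∀ a b : Ordinal.{u}, a ♯ b = b ♯ a := by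
  intro a
  induction a using Ordinal.induction with
  | h a IHa =>
    intro b
    induction b using Ordinal.induction with
    | h b IHb =>
      rw [nadd_def a b, nadd_def b a, max_comm]
      congr 1
      · congr 1
        funext b' hb'
        exact IHb b' hb'
      · congr 1
        funext a' ha'
        exact IHa a' ha' b

theorem nadd_zero (a : Ordinal.{u}) : a ♯ 0 = a := by
  induction a using Ordinal.induction with
  | h a IH =>
    refine eq_of_forall_lt_iff fun x => ?_
    rw [lt_nadd_iff]
    constructor
    · rintro (⟨a', ha', hx⟩ | ⟨c', hc', _⟩)
      · rw [IH a' ha'] at hx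
        exact hx.trans_lt ha'
      · exact absurd hc' (by simp)
    · intro hx
      exact Or.inl ⟨x, hx, (IH x hx).ge⟩

theorem zero_nadd (a : Ordinal.{u}) : 0 ♯ a = a := by
  rw [nadd_comm, nadd_zero]

theorem nadd_succ (a b : Ordinal.{u}) : a ♯ Order.succ b = Order.succ (a ♯ b) := by
  induction a using Ordinal.induction with
  | h a IH =>
    refine eq_of_forall_lt_iff fun x => ?_
    rw [lt_nadd_iff, Order.lt_succ_iff]
    constructor
    · rintro (⟨a', ha', hx⟩ | ⟨b', hb', hx⟩)
      · rw [IH a' ha'] at hx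
        exact hx.trans (Order.succ_le_of_lt (nadd_lt_nadd_right ha' b))
      · exact hx.trans (nadd_le_nadd_left (Order.lt_succ_iff.1 hb') a)
    · intro hx
      exact Or.inr ⟨b, Order.lt_succ b, hx⟩

theorem add_le_nadd (a b : Ordinal.{u}) : a + b ≤ a ♯ b := by
  induction b using Ordinal.induction with
  | h b IH =>
    refine le_of_forall_lt fun x hx => ?_
    rcases lt_or_ge x a with h | h
    · calc x < a := h
        _ = a ♯ 0 := (nadd_zero a).symm
        _ ≤ a ♯ b := nadd_le_nadd_left (by simp) a
    · have hxa : a + (x - a) = x := Ordinal.add_sub_cancel_of_le h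
      have hlt : x - a < b := by
        rw [← hxa] at hx
        exact (add_lt_add_iff_left a).1 hx
      calc x = a + (x - a) := hxa.symm
        _ ≤ a ♯ (x - a) := IH _ hlt
        _ < a ♯ b := nadd_lt_nadd_left hlt a

theorem lt_nadd_nadd_iff {a b c x : Ordinal.{u}} : x < (a ♯ b) ♯ c ↔
    (∃ a' < a, x ≤ (a' ♯ b) ♯ c) ∨ (∃ b' < b, x ≤ (a ♯ b') ♯ c) ∨
      ∃ c' < c, x ≤ (a ♯ b) ♯ c' := by
  rw [lt_nadd_iff]
  constructor
  · rintro (⟨y, hy, hx⟩ | h)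
    · rcases lt_nadd_iff.1 hy with ⟨a', ha', hy'⟩ | ⟨b', hb', hy'⟩
      · exact Or.inl ⟨a', ha', hx.trans (nadd_le_nadd_right hy' c)⟩
      · exact Or.inr (Or.inl ⟨b', hb', hx.trans (nadd_le_nadd_right hy' c)⟩)
    · exact Or.inr (Or.inr h)
  · rintro (⟨a', ha', hx⟩ | ⟨b', hb', hx⟩ | h)
    · exact Or.inl ⟨_, nadd_lt_nadd_right ha' b, hx⟩
    · exact Or.inl ⟨_, nadd_lt_nadd_left hb' a, hx⟩
    · exact Or.inr h

theorem lt_nadd_nadd_iff' {a b c x : Ordinal.{u}} : x < a ♯ (b ♯ c) ↔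
    (∃ a' < a, x ≤ a' ♯ (b ♯ c)) ∨ (∃ b' < b, x ≤ a ♯ (b' ♯ c)) ∨
      ∃ c' < c, x ≤ a ♯ (b ♯ c') := by
  rw [lt_nadd_iff]
  constructor
  · rintro (h | ⟨y, hy, hx⟩)
    · exact Or.inl h
    · rcases lt_nadd_iff.1 hy with ⟨b', hb', hy'⟩ | ⟨c', hc', hy'⟩
      · exact Or.inr (Or.inl ⟨b', hb', hx.trans (nadd_le_nadd_left hy' a)⟩)
      · exact Or.inr (Or.inr ⟨c', hc', hx.trans (nadd_le_nadd_left hy' a)⟩)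
  · rintro (h | ⟨b', hb', hx⟩ | ⟨c', hc', hx⟩)
    · exact Or.inl h
    · exact Or.inr ⟨_, nadd_lt_nadd_right hb' c, hx⟩
    · exact Or.inr ⟨_, nadd_lt_nadd_left hc' b, hx⟩

theorem nadd_assoc : ∀ a b c : Ordinal.{u}, a ♯ b ♯ c = a ♯ (b ♯ c) := by
  intro a
  induction a using Ordinal.induction with
  | h a IHa =>
    intro b
    induction b using Ordinal.induction with
    | h b IHb =>
      intro c
      induction c using Ordinal.induction with
      | h c IHc =>
        refine eq_of_forall_lt_iff fun x => ?_
        rw [lt_nadd_nadd_iff, lt_nadd_nadd_iff']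
        refine or_congr ?_ (or_congr ?_ ?_)
        · exact exists_congr fun a' => and_congr_right fun ha' => by rw [IHa a' ha']
        · exact exists_congr fun b' => and_congr_right fun hb' => by rw [IHb b' hb']
        · exact exists_congr fun c' => and_congr_right fun hc' => by rw [IHc c' hc']

theorem nadd_right_comm (a b c : Ordinal.{u}) : a ♯ b ♯ c = a ♯ c ♯ b := by
  rw [nadd_assoc, nadd_comm b, ← nadd_assoc]

end Ordinal

namespace MixedAux

open Ordinal Order

theorem otype_Iio (a : Ordinal.{0}) : otype (Set.Iio a) = Ordinal.lift.{1} a :=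
  (Ordinal.type_subrel _ a).trans (Ordinal.typein_ordinal a)

theorem otype_mono {X Y : Set Ordinal.{0}} (h : X ⊆ Y) : otype X ≤ otype Y :=
  RelEmbedding.ordinal_type_le ⟨⟨Set.inclusion h, Set.inclusion_injective h⟩, Iff.rfl⟩

theorem otype_inter_Iio_lt {X : Set Ordinal.{0}} {ξ : Ordinal.{0}} (hξ : ξ ∈ X) :
    otype (X ∩ Set.Iio ξ) < otype X := by
  refine PrincipalSeg.ordinal_type_lt
    { toFun := fun x => ⟨x.1, x.2.1⟩, inj' := ?_, map_rel_iff' := Iff.rfl,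
      top := ⟨ξ, hξ⟩, mem_range_iff_rel' := ?_ }
  · rintro ⟨x, hx⟩ ⟨y, hy⟩ h
    simp only [Subtype.mk.injEq] at h ⊢
    exact h
  · rintro ⟨b, hb⟩
    constructor
    · rintro ⟨⟨a, ha⟩, he⟩
      have : a = b := congrArg Subtype.val he
      exact this ▸ ha.2
    · intro h
      exact ⟨⟨b, hb, h⟩, rfl⟩

theorem otype_empty : otype (∅ : Set Ordinal.{0}) = 0 :=
  Ordinal.type_eq_zero_of_empty _

theorem otype_sep_union {X Y : Set Ordinal.{0}} (h : ∀ x ∈ X, ∀ y ∈ Y, x < y) :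
    otype (X ∪ Y) = otype X + otype Y := by
  rw [otype, otype, otype, ← Ordinal.type_sum_lex]
  refine Ordinal.type_eq.2 ⟨RelIso.symm ⟨Equiv.ofBijective
    (Sum.elim (fun x => (⟨x.1, Or.inl x.2⟩ : ↥(X ∪ Y))) (fun y => ⟨y.1, Or.inr y.2⟩)) ⟨?_, ?_⟩,
    ?_⟩⟩
  · rintro (⟨x, hx⟩ | ⟨x, hx⟩) (⟨y, hy⟩ | ⟨y, hy⟩) he <;>
      simp only [Sum.elim_inl, Sum.elim_inr, Subtype.mk.injEq] at he
    · exact congrArg Sum.inl (Subtype.ext (congrArg Subtype.val he : x = y))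
    · exact absurd ((show x = y from congrArg Subtype.val he) ▸ h x hx y hy) (lt_irrefl _)
    · exact absurd ((show x = y from congrArg Subtype.val he) ▸ h y hy x hx) (lt_irrefl _)
    · exact congrArg Sum.inr (Subtype.ext (congrArg Subtype.val he : x = y))
  · rintro ⟨z, hz | hz⟩
    · exact ⟨Sum.inl ⟨z, hz⟩, rfl⟩
    · exact ⟨Sum.inr ⟨z, hz⟩, rfl⟩
  · rintro (⟨x, hx⟩ | ⟨x, hx⟩) (⟨y, hy⟩ | ⟨y, hy⟩) <;>
      simp only [Equiv.ofBijective_apply, Sum.elim_inl, Sum.elim_inr, Sum.lex_inl_inl,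
        Sum.lex_inr_inr, Sum.lex_inr_inl, Sum.Lex.sep, iff_true]
    · exact Iff.rfl
    · exact h x hx y hy
    · exact iff_false_intro (fun hlt : x < y => absurd (hlt.trans (h y hy x hx)) (lt_irrefl _))
    · exact Iff.rfl

theorem otype_Ico (c e : Ordinal.{0}) : otype (Set.Ico c (c + e)) = Ordinal.lift.{1} e := by
  rw [← otype_Iio e]
  refine (Ordinal.type_eq.2 ⟨⟨Equiv.ofBijective
    (fun x => (⟨c + x.1, le_self_add, add_lt_add_right x.2 c⟩ : ↥(Set.Ico c (c + e))))
    ⟨?_, ?_⟩, ?_⟩⟩).symm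
  · rintro ⟨x, hx⟩ ⟨y, hy⟩ he
    have := congrArg Subtype.val he
    simp only at this
    exact Subtype.ext (add_left_cancel this)
  · rintro ⟨z, hz1, hz2⟩
    refine ⟨⟨z - c, ?_⟩, ?_⟩
    · have : c + (z - c) < c + e := by rwa [Ordinal.add_sub_cancel_of_le hz1]
      exact (add_lt_add_iff_left c).1 this
    · exact Subtype.ext (Ordinal.add_sub_cancel_of_le hz1)
  · rintro ⟨x, hx⟩ ⟨y, hy⟩
    exact add_lt_add_iff_left c

theorem otype_image {U V : Set Ordinal.{0}}
    (e : Subrel ((· < ·) : Ordinal.{0} → Ordinal.{0} → Prop) U ≃r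
         Subrel ((· < ·) : Ordinal.{0} → Ordinal.{0} → Prop) V)
    {W : Set Ordinal.{0}} (hWU : W ⊆ U) :
    otype ((fun y : ↥U => (e y).1) '' {y : ↥U | ↑y ∈ W}) = otype W := by
  refine (Ordinal.type_eq.2 ⟨⟨Equiv.ofBijective
    (fun w => ⟨(e ⟨w.1, hWU w.2⟩).1, ⟨⟨w.1, hWU w.2⟩, w.2, rfl⟩⟩) ⟨?_, ?_⟩, ?_⟩⟩).symm
  · rintro ⟨x, hx⟩ ⟨y, hy⟩ he
    have := congrArg Subtype.val he
    simp only at this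
    have h2 : (⟨x, hWU hx⟩ : ↥U) = ⟨y, hWU hy⟩ := e.injective (Subtype.ext this)
    have h3 : x = y := congrArg Subtype.val h2
    exact Subtype.ext h3
  · rintro ⟨z, ⟨y, hy, rfl⟩⟩
    exact ⟨⟨y.1, hy⟩, rfl⟩
  · rintro ⟨x, hx⟩ ⟨y, hy⟩
    exact (e.map_rel_iff (a := ⟨x, hWU hx⟩) (b := ⟨y, hWU hy⟩))

/-- closure of `Iio (ω^γ)` under natural addition -/
def SCstat (γ : Ordinal) : Prop := ∀ b c, b < ω ^ γ → c < ω ^ γ → b ♯ c < ω ^ γ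

/-- absorption: a multiple of `ω^γ` naturally added to something small is ordinary addition -/
def L4stat (γ : Ordinal) : Prop := ∀ y d, ω ^ γ ∣ y → d < ω ^ γ → y ♯ d = y + d

theorem l4_of {γ : Ordinal} (hSC : SCstat γ) : L4stat γ := by
  have hpos : (0 : Ordinal) < ω ^ γ := opow_pos γ omega0_pos
  intro y
  induction y using Ordinal.induction with
  | h y IHy =>
    intro d
    induction d using Ordinal.induction with
    | h d IHd =>
      intro hy hd
      refine le_antisymm ?_ (add_le_nadd y d)
      rw [nadd_le_iff]
      constructor
      · intro y' hy'
        obtain ⟨p, rfl⟩ := hy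
        have hq : ω ^ γ * (y' / ω ^ γ) ≤ y' := mul_div_le y' (ω ^ γ)
        have hr : y' % ω ^ γ < ω ^ γ := mod_lt y' hpos.ne'
        have hqp : y' / ω ^ γ < p := (mul_lt_mul_iff_right₀ hpos).1 (hq.trans_lt hy')
        have h2 : (y' % ω ^ γ) ♯ d < ω ^ γ := hSC _ _ hr hd
        have h1 : ω ^ γ * (y' / ω ^ γ) ♯ (y' % ω ^ γ) =
            ω ^ γ * (y' / ω ^ γ) + y' % ω ^ γ :=
          IHy _ (hq.trans_lt hy') _ ⟨_, rfl⟩ hr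
        have h3 : ω ^ γ * (y' / ω ^ γ) ♯ ((y' % ω ^ γ) ♯ d) =
            ω ^ γ * (y' / ω ^ γ) + ((y' % ω ^ γ) ♯ d) :=
          IHy _ (hq.trans_lt hy') _ ⟨_, rfl⟩ h2
        calc y' ♯ d = (ω ^ γ * (y' / ω ^ γ) + y' % ω ^ γ) ♯ d := by rw [div_add_mod]
          _ = (ω ^ γ * (y' / ω ^ γ) ♯ (y' % ω ^ γ)) ♯ d := by rw [h1]
          _ = ω ^ γ * (y' / ω ^ γ) ♯ ((y' % ω ^ γ) ♯ d) := nadd_assoc _ _ _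
          _ = ω ^ γ * (y' / ω ^ γ) + ((y' % ω ^ γ) ♯ d) := h3
          _ < ω ^ γ * (y' / ω ^ γ) + ω ^ γ := add_lt_add_right h2 _
          _ = ω ^ γ * succ (y' / ω ^ γ) := (mul_succ _ _).symm
          _ ≤ ω ^ γ * p := mul_le_mul_right (succ_le_of_lt hqp) _
          _ ≤ ω ^ γ * p + d := le_self_add
      · intro d' hd'
        rw [IHd d' hd' hy (hd'.trans hd)]
        exact add_lt_add_right hd' y

theorem l5_of {γ : Ordinal} (hSC : SCstat γ) (hL4 : L4stat γ) :
    ∀ a d, d < ω ^ γ → a ♯ d < a + ω ^ γ := by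
  have hpos : (0 : Ordinal) < ω ^ γ := opow_pos γ omega0_pos
  intro a d hd
  have hr : a % ω ^ γ < ω ^ γ := mod_lt a hpos.ne'
  have h2 : (a % ω ^ γ) ♯ d < ω ^ γ := hSC _ _ hr hd
  calc a ♯ d = (ω ^ γ * (a / ω ^ γ) + a % ω ^ γ) ♯ d := by rw [div_add_mod]
    _ = (ω ^ γ * (a / ω ^ γ) ♯ (a % ω ^ γ)) ♯ d := by rw [hL4 _ _ ⟨_, rfl⟩ hr]
    _ = ω ^ γ * (a / ω ^ γ) ♯ ((a % ω ^ γ) ♯ d) := nadd_assoc _ _ _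
    _ = ω ^ γ * (a / ω ^ γ) + ((a % ω ^ γ) ♯ d) := hL4 _ _ ⟨_, rfl⟩ h2
    _ < ω ^ γ * (a / ω ^ γ) + ω ^ γ := add_lt_add_right h2 _
    _ ≤ a + ω ^ γ := add_le_add_left (mul_div_le a _) _

theorem ge_of {γ : Ordinal} (hL4 : L4stat γ) :
    ∀ x y, ω ^ γ ∣ y → x ♯ y + ω ^ γ ≤ x ♯ (y + ω ^ γ) := by
  intro x y hy
  rcases eq_or_ne γ 0 with rfl | hγ
  · rw [opow_zero, add_one_eq_succ, add_one_eq_succ, nadd_succ]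
  · have hlim : IsSuccLimit (ω ^ γ) := isSuccLimit_opow_left isSuccLimit_omega0 hγ
    rw [add_le_iff_of_isSuccLimit hlim]
    intro d hd
    calc x ♯ y + d ≤ (x ♯ y) ♯ d := add_le_nadd _ _
      _ = x ♯ (y ♯ d) := nadd_assoc _ _ _
      _ = x ♯ (y + d) := by rw [hL4 y d hy hd]
      _ ≤ x ♯ (y + ω ^ γ) := nadd_le_nadd_left (add_le_add_right hd.le y) x

theorem key_of {γ : Ordinal} (hSC : SCstat γ) (hL4 : L4stat γ) :
    ∀ x, ω ^ γ ∣ x → ∀ y, ω ^ γ ∣ y → x ♯ (y + ω ^ γ) = x ♯ y + ω ^ γ := by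
  have hpos : (0 : Ordinal) < ω ^ γ := opow_pos γ omega0_pos
  intro x
  induction x using Ordinal.induction with
  | h x IH =>
    intro hx y hy
    refine le_antisymm ?_ (ge_of hL4 x y hy)
    rw [nadd_le_iff]
    constructor
    · intro x' hx'
      set q := x' / ω ^ γ with hqdef
      have hx2le : ω ^ γ * q ≤ x' := mul_div_le x' _
      have hd' : ω ^ γ * q + (x' - ω ^ γ * q) = x' := Ordinal.add_sub_cancel_of_le hx2le
      have hx'lt : x' < ω ^ γ * q + ω ^ γ := by
        have := lt_mul_succ_div x' hpos.ne'
        rwa [mul_succ] at this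
      have hdlt : x' - ω ^ γ * q < ω ^ γ := by
        have h := hd' ▸ hx'lt
        exact (add_lt_add_iff_left (ω ^ γ * q)).1 h
      obtain ⟨p, hp⟩ := hx
      have hqp : q < p := by
        refine (mul_lt_mul_iff_right₀ hpos).1 ?_
        exact hx2le.trans_lt (hp ▸ hx')
      have hx2x : ω ^ γ * q + ω ^ γ ≤ x := by
        rw [← mul_succ, hp]
        exact mul_le_mul_right (succ_le_of_lt hqp) _
      have hIH : ω ^ γ * q ♯ (y + ω ^ γ) = ω ^ γ * q ♯ y + ω ^ γ :=
        IH _ (hx2le.trans_lt hx') ⟨q, rfl⟩ y hy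
      have hL4x : ω ^ γ * q ♯ (x' - ω ^ γ * q) = x' := by
        rw [hL4 _ _ ⟨q, rfl⟩ hdlt, hd']
      have hmid : ω ^ γ * q ♯ y + ω ^ γ ≤ x ♯ y := by
        calc ω ^ γ * q ♯ y + ω ^ γ = y ♯ (ω ^ γ * q) + ω ^ γ := by rw [nadd_comm]
          _ ≤ y ♯ (ω ^ γ * q + ω ^ γ) := ge_of hL4 y _ ⟨q, rfl⟩
          _ = (ω ^ γ * q + ω ^ γ) ♯ y := nadd_comm _ _
          _ ≤ x ♯ y := nadd_le_nadd_right hx2x y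
      calc x' ♯ (y + ω ^ γ) = (ω ^ γ * q ♯ (x' - ω ^ γ * q)) ♯ (y + ω ^ γ) := by rw [hL4x]
        _ = (ω ^ γ * q ♯ (y + ω ^ γ)) ♯ (x' - ω ^ γ * q) := nadd_right_comm _ _ _
        _ = (ω ^ γ * q ♯ y + ω ^ γ) ♯ (x' - ω ^ γ * q) := by rw [hIH]
        _ < (ω ^ γ * q ♯ y + ω ^ γ) + ω ^ γ := l5_of hSC hL4 _ _ hdlt
        _ ≤ x ♯ y + ω ^ γ := add_le_add_left hmid _
    · intro w hw
      rcases le_or_gt w y with h | h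
      · exact lt_of_le_of_lt (nadd_le_nadd_left h x) (lt_add_of_pos_right _ hpos)
      · have hyw : y + (w - y) = w := Ordinal.add_sub_cancel_of_le h.le
        have hwd : w - y < ω ^ γ := by
          have h2 := hyw ▸ hw
          exact (add_lt_add_iff_left y).1 h2
        calc x ♯ w = x ♯ (y ♯ (w - y)) := by rw [hL4 y _ hy hwd, hyw]
          _ = (x ♯ y) ♯ (w - y) := (nadd_assoc _ _ _).symm
          _ < x ♯ y + ω ^ γ := l5_of hSC hL4 _ _ hwd

theorem mulnat_of {γ : Ordinal} (hSC : SCstat γ) (hL4 : L4stat γ) :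
    ∀ m n : ℕ, (ω ^ γ * m) ♯ (ω ^ γ * n) = ω ^ γ * (m + n : ℕ) := by
  intro m n
  induction n with
  | zero => simp [Ordinal.nadd_zero]
  | succ n ih =>
    have h1 : ((n + 1 : ℕ) : Ordinal) = (n : Ordinal) + 1 := by push_cast; ring_nf
    have h2 : ((m + (n + 1) : ℕ) : Ordinal) = ((m + n : ℕ) : Ordinal) + 1 := by
      push_cast; exact (add_assoc _ _ _).symm
    rw [h1, h2, mul_add, mul_add, mul_one,
      key_of hSC hL4 _ ⟨m, rfl⟩ _ ⟨n, rfl⟩, ih]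

theorem sc : ∀ γ : Ordinal, SCstat γ := by
  intro γ
  induction γ using Ordinal.induction with
  | h γ IH =>
    rcases Ordinal.zero_or_succ_or_isSuccLimit γ with rfl | ⟨δ, rfl⟩ | hlim
    · intro b c hb hc
      rw [opow_zero] at *
      rw [Ordinal.lt_one_iff_zero] at hb hc
      subst hb; subst hc
      simpa [Ordinal.nadd_zero] using zero_lt_one (α := Ordinal)
    · have hδ : δ < succ δ := lt_succ δ
      have hSCδ := IH δ hδ
      have hL4δ := l4_of hSCδ
      have hpos : (0 : Ordinal) < ω ^ δ := opow_pos δ omega0_pos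
      intro b c hb hc
      rw [opow_succ] at hb hc ⊢
      obtain ⟨nb, hnb⟩ := lt_omega0.1 ((div_lt hpos.ne').2 hb)
      obtain ⟨nc, hnc⟩ := lt_omega0.1 ((div_lt hpos.ne').2 hc)
      have hb' : b < ω ^ δ * (nb + 1 : ℕ) := by
        have := lt_mul_succ_div b hpos.ne'
        rwa [hnb, ← add_one_eq_succ, ← Nat.cast_succ] at this
      have hc' : c < ω ^ δ * (nc + 1 : ℕ) := by
        have := lt_mul_succ_div c hpos.ne'
        rwa [hnc, ← add_one_eq_succ, ← Nat.cast_succ] at this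
      calc b ♯ c ≤ (ω ^ δ * (nb + 1 : ℕ)) ♯ (ω ^ δ * (nc + 1 : ℕ)) :=
            nadd_le_nadd hb'.le hc'.le
        _ = ω ^ δ * ((nb + 1) + (nc + 1) : ℕ) := mulnat_of hSCδ hL4δ _ _
        _ < ω ^ δ * ω := (mul_lt_mul_iff_right₀ hpos).2 (nat_lt_omega0 _)
    · intro b c hb hc
      obtain ⟨δb, hδb, hb'⟩ := (lt_opow_of_isSuccLimit omega0_ne_zero hlim).1 hb
      obtain ⟨δc, hδc, hc'⟩ := (lt_opow_of_isSuccLimit omega0_ne_zero hlim).1 hc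
      have hδ : max δb δc < γ := max_lt hδb hδc
      have hb'' : b < ω ^ max δb δc :=
        hb'.trans_le (opow_le_opow_right omega0_pos (le_max_left _ _))
      have hc'' : c < ω ^ max δb δc :=
        hc'.trans_le (opow_le_opow_right omega0_pos (le_max_right _ _))
      exact (IH _ hδ _ _ hb'' hc'').trans_le
        (opow_le_opow_right omega0_pos hδ.le)

theorem l4 (γ : Ordinal) : L4stat γ := l4_of (sc γ)

theorem key (γ x y : Ordinal) (hx : ω ^ γ ∣ x) (hy : ω ^ γ ∣ y) :
    x ♯ (y + ω ^ γ) = x ♯ y + ω ^ γ :=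
  key_of (sc γ) (l4 γ) x hx y hy

theorem decomp : ∀ a : Ordinal, a ≠ 0 → ∃ γ : Ordinal, ∃ a₁ : Ordinal, ω ^ γ ∣ a₁ ∧ a = a₁ + ω ^ γ := by
  intro a
  induction a using Ordinal.induction with
  | h a IH =>
    intro ha
    have IH' : ∀ k < a, k ≠ 0 → ∃ γ : Ordinal, ∃ a₁ : Ordinal, ω ^ γ ∣ a₁ ∧ k = a₁ + ω ^ γ := IH
    clear IH
    have hpos : (0 : Ordinal) < ω ^ log ω a := opow_pos _ omega0_pos
    have hr : a % ω ^ log ω a < ω ^ log ω a := mod_lt a hpos.ne'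
    have hsplit : ω ^ log ω a * (a / ω ^ log ω a) + a % ω ^ log ω a = a := div_add_mod a _
    rcases eq_or_ne (a % ω ^ log ω a) 0 with h0 | h0
    · obtain ⟨n, hn⟩ := lt_omega0.1 (div_opow_log_lt a one_lt_omega0)
      have hq0 : a / ω ^ log ω a ≠ 0 := by
        intro h
        apply ha
        rw [← hsplit, h, mul_zero, zero_add, h0]
      obtain ⟨m, rfl⟩ : ∃ m : ℕ, n = m + 1 := by
        cases n with
        | zero => exact absurd (by rw [hn]; rfl) hq0
        | succ m => exact ⟨m, rfl⟩
      refine ⟨log ω a, ω ^ log ω a * m, ⟨m, rfl⟩, ?_⟩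
      conv_lhs => rw [← hsplit, h0, add_zero, hn]
      push_cast
      rw [mul_add, mul_one]
    · have hra : a % ω ^ log ω a < a := hr.trans_le (opow_log_le_self ω ha)
      obtain ⟨γ, r₁, hdvd, hre⟩ := IH' _ hra h0
      have hγe : γ ≤ log ω a := by
        by_contra hc
        push_neg at hc
        have h1 : ω ^ γ ≤ a % ω ^ log ω a := hre ▸ le_add_self
        have h2 := h1.trans_lt hr
        exact absurd ((opow_lt_opow_iff_right one_lt_omega0).1 h2) (not_lt.2 hc.le)
      refine ⟨γ, ω ^ log ω a * (a / ω ^ log ω a) + r₁, ?_, ?_⟩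
      · obtain ⟨u, hu⟩ := hdvd
        refine ⟨ω ^ (log ω a - γ) * (a / ω ^ log ω a) + u, ?_⟩
        rw [mul_add, ← mul_assoc, ← opow_add, Ordinal.add_sub_cancel_of_le hγe, ← hu]
      · conv_lhs => rw [← hsplit, hre]
        rw [add_assoc]


theorem dvd_add' {x y z : Ordinal} (h1 : x ∣ y) (h2 : x ∣ z) : x ∣ y + z := by
  obtain ⟨u, rfl⟩ := h1
  obtain ⟨v, rfl⟩ := h2
  exact ⟨u + v, (mul_add x u v).symm⟩


theorem bin : ∀ c a b : Ordinal.{0}, a ♯ b = c →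
    ∃ A B : Set Ordinal.{0}, Disjoint A B ∧ A ∪ B = Set.Iio c ∧
      otype A = Ordinal.lift.{1} a ∧ otype B = Ordinal.lift.{1} b := by
  intro c
  induction c using Ordinal.induction with
  | h c IH =>
    have step : ∀ a b γ b₁ : Ordinal.{0}, a ♯ b = c → b = b₁ + ω ^ γ → ω ^ γ ∣ b₁ →
        ω ^ γ ∣ a →
        ∃ A B : Set Ordinal.{0}, Disjoint A B ∧ A ∪ B = Set.Iio c ∧
          otype A = Ordinal.lift.{1} a ∧ otype B = Ordinal.lift.{1} b := by
      intro a b γ b₁ hab hb hdb hda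
      have hkey : a ♯ b = a ♯ b₁ + ω ^ γ := by rw [hb, key γ a b₁ hda hdb]
      have hcc : c = a ♯ b₁ + ω ^ γ := by rw [← hab, hkey]
      have hc' : a ♯ b₁ < c := by
        rw [hcc]; exact lt_add_of_pos_right _ (opow_pos _ omega0_pos)
      obtain ⟨A, B', hdisj, huni, hA, hB'⟩ := IH _ hc' a b₁ rfl
      have hAsub : A ⊆ Set.Iio (a ♯ b₁) := huni ▸ Set.subset_union_left
      have hB'sub : B' ⊆ Set.Iio (a ♯ b₁) := huni ▸ Set.subset_union_right
      refine ⟨A, B' ∪ Set.Ico (a ♯ b₁) c, ?_, ?_, hA, ?_⟩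
      · refine Set.disjoint_union_right.2 ⟨hdisj, ?_⟩
        refine Set.disjoint_left.2 fun x hxA hxI => ?_
        exact absurd (hAsub hxA) (not_lt.2 hxI.1)
      · rw [← Set.union_assoc, huni]
        exact Set.Iio_union_Ico_eq_Iio (hc'.le)
      · have hsep : ∀ x ∈ B', ∀ y ∈ Set.Ico (a ♯ b₁) c, x < y :=
          fun x hx y hy => (hB'sub hx).trans_le hy.1
        rw [otype_sep_union hsep, hB', hb]
        have : Set.Ico (a ♯ b₁) c = Set.Ico (a ♯ b₁) (a ♯ b₁ + ω ^ γ) := by rw [← hcc]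
        rw [this, otype_Ico, ← Ordinal.lift_add]
    intro a b hab
    rcases eq_or_ne b 0 with rfl | hb0
    · rw [nadd_zero] at hab
      subst hab
      exact ⟨Set.Iio a, ∅, Set.disjoint_empty _, Set.union_empty _, otype_Iio a, by
        rw [otype_empty, Ordinal.lift_zero]⟩
    rcases eq_or_ne a 0 with rfl | ha0
    · rw [zero_nadd] at hab
      subst hab
      exact ⟨∅, Set.Iio b, Set.empty_disjoint _, Set.empty_union _, by
        rw [otype_empty, Ordinal.lift_zero], otype_Iio b⟩
    obtain ⟨γa, a₁, hda, haa⟩ := decomp a ha0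
    obtain ⟨γb, b₁, hdb, hbb⟩ := decomp b hb0
    rcases le_total γb γa with hle | hle
    · have hdvd1 : ω ^ γb ∣ ω ^ γa :=
        ⟨ω ^ (γa - γb), by rw [← opow_add, Ordinal.add_sub_cancel_of_le hle]⟩
      have hdvda : ω ^ γb ∣ a := haa ▸ dvd_add' (hdvd1.trans hda) hdvd1
      exact step a b γb b₁ hab hbb hdb hdvda
    · have hdvd1 : ω ^ γa ∣ ω ^ γb :=
        ⟨ω ^ (γb - γa), by rw [← opow_add, Ordinal.add_sub_cancel_of_le hle]⟩
      have hdvdb : ω ^ γa ∣ b := hbb ▸ dvd_add' (hdvd1.trans hdb) hdvd1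
      obtain ⟨B, A, hd, hu, hB, hA⟩ := step b a γa a₁ (by rw [nadd_comm]; exact hab) haa hda hdvdb
      exact ⟨A, B, hd.symm, (Set.union_comm _ _).trans hu, hA, hB⟩


theorem natFinSum_zero (α : Fin 0 → Ordinal.{0}) : natFinSum 0 α = 0 := by
  unfold natFinSum; simp

theorem natFinSum_succ0 (n : ℕ) (α : Fin (n + 1) → Ordinal.{0}) :
    natFinSum (n + 1) α = α 0 ♯ natFinSum n (fun i => α i.succ) := by
  unfold natFinSum
  rw [List.ofFn_succ, List.foldr_cons]

theorem natFinSum_mono : ∀ (n : ℕ) (β α : Fin n → Ordinal.{0}), (∀ j, β j ≤ α j) →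
    natFinSum n β ≤ natFinSum n α := by
  intro n
  induction n with
  | zero =>
    intro β α _
    rw [natFinSum_zero, natFinSum_zero]
  | succ n ih =>
    intro β α hle
    rw [natFinSum_succ0, natFinSum_succ0]
    exact nadd_le_nadd (hle 0) (ih _ _ fun j => hle j.succ)

theorem natFinSum_lt : ∀ (n : ℕ) (β α : Fin n → Ordinal.{0}), (∀ j, β j ≤ α j) →
    ∀ i, β i < α i → natFinSum n β < natFinSum n α := by
  intro n
  induction n with
  | zero =>
    intro β α _ i
    exact i.elim0
  | succ n ih =>
    intro β α hle i hi
    rw [natFinSum_succ0, natFinSum_succ0]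
    induction i using Fin.cases with
    | zero =>
      exact (nadd_lt_nadd_right hi _).trans_le
        (nadd_le_nadd_left (natFinSum_mono n _ _ fun j => hle j.succ) _)
    | succ i =>
      exact (nadd_le_nadd_right (hle 0) _).trans_lt
        (nadd_lt_nadd_left (ih _ _ (fun j => hle j.succ) i hi) _)

theorem mixed_le : ∀ γ : Ordinal.{0}, ∀ {n : ℕ} (α : Fin n → Ordinal.{0}),
    IsMixedSum γ α → γ ≤ natFinSum n α := by
  intro γ
  induction γ using Ordinal.induction with
  | h γ IH =>
    rintro n α ⟨A, hdisj, huni, hot⟩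
    refine le_of_forall_lt fun ξ hξ => ?_
    have hmem : ξ ∈ ⋃ i, A i := huni ▸ (hξ : ξ ∈ Set.Iio γ)
    obtain ⟨i, hi⟩ := Set.mem_iUnion.1 hmem
    set B : Fin n → Set Ordinal.{0} := fun j => A j ∩ Set.Iio ξ with hB
    have hotB : ∀ j, otype (B j) ≤ Ordinal.lift.{1} ξ := fun j =>
      (otype_mono Set.inter_subset_right).trans (le_of_eq (otype_Iio ξ))
    choose β hβ using fun j => Ordinal.mem_range_lift_of_le (hotB j)
    have hmix : IsMixedSum ξ β := by
      refine ⟨B, fun i j hij => (hdisj i j hij).mono Set.inter_subset_left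
        Set.inter_subset_left, ?_, fun j => (hβ j).symm⟩
      rw [← Set.iUnion_inter, huni]
      exact Set.inter_eq_self_of_subset_right (Set.Iio_subset_Iio hξ.le)
    have h1 : ξ ≤ natFinSum n β := IH ξ hξ β hmix
    have hle : ∀ j, β j ≤ α j := fun j => by
      have h2 : otype (B j) ≤ otype (A j) := otype_mono Set.inter_subset_left
      rw [← hβ j, hot j] at h2
      exact Ordinal.lift_le.1 h2
    have hlt : β i < α i := by
      have h2 : otype (B i) < otype (A i) := otype_inter_Iio_lt hi
      rw [← hβ i, hot i] at h2
      exact Ordinal.lift_lt.1 h2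
    have hsum : natFinSum n β < natFinSum n α := natFinSum_lt n β α hle i hlt
    exact h1.trans_lt hsum

theorem mixed_of_natFinSum : ∀ (n : ℕ) (α : Fin n → Ordinal.{0}),
    IsMixedSum (natFinSum n α) α := by
  intro n
  induction n with
  | zero =>
    intro α
    refine ⟨fun _ => ∅, fun i => i.elim0, ?_, fun i => i.elim0⟩
    rw [natFinSum_zero]
    ext x
    simp
  | succ n ihn =>
    intro α
    set s := natFinSum n (fun i => α i.succ) with hs
    obtain ⟨S, T, hST, hSTu, hSo, hTo⟩ := bin (α 0 ♯ s) (α 0) s rfl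
    obtain ⟨A', hdisj', huni', hot'⟩ := ihn (fun i => α i.succ)
    have htyp : otype (Set.Iio s) = otype T := by rw [otype_Iio, hTo]
    obtain ⟨e⟩ := Ordinal.type_eq.1 htyp
    set Im : Fin n → Set Ordinal.{0} :=
      fun i => (fun y : ↥(Set.Iio s) => ((e y : ↥T) : Ordinal.{0})) '' {y | ↑y ∈ A' i} with hIm
    have hA'sub : ∀ i, A' i ⊆ Set.Iio s := fun i => huni' ▸ Set.subset_iUnion A' i
    have hImT : ∀ i, Im i ⊆ T := by
      rintro i x ⟨y, hy, rfl⟩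
      exact (e y).2
    have hImU : ⋃ i, Im i = T := by
      apply Set.Subset.antisymm (Set.iUnion_subset hImT)
      intro t ht
      have hy : ((e.symm ⟨t, ht⟩ : ↥(Set.Iio s)) : Ordinal) ∈ ⋃ i, A' i := by
        rw [huni']; exact (e.symm ⟨t, ht⟩).2
      obtain ⟨i, hyi⟩ := Set.mem_iUnion.1 hy
      refine Set.mem_iUnion.2 ⟨i, ⟨e.symm ⟨t, ht⟩, hyi, ?_⟩⟩
      show ((e (e.symm ⟨t, ht⟩) : ↥T) : Ordinal) = t
      rw [RelIso.apply_symm_apply]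
    refine ⟨Fin.cases S Im, ?_, ?_, ?_⟩
    · intro i j hij
      induction i using Fin.cases with
      | zero =>
        induction j using Fin.cases with
        | zero => exact absurd rfl hij
        | succ j =>
          simp only [Fin.cases_zero, Fin.cases_succ]
          exact hST.mono_right (hImT j)
      | succ i =>
        induction j using Fin.cases with
        | zero =>
          simp only [Fin.cases_zero, Fin.cases_succ]
          exact (hST.mono_right (hImT i)).symm
        | succ j =>
          simp only [Fin.cases_succ]
          have hij' : i ≠ j := fun h => hij (by rw [h])
          refine Set.disjoint_left.2 ?_
          rintro x ⟨y1, hy1, rfl⟩ ⟨y2, hy2, he2⟩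
          have : y2 = y1 := e.injective (Subtype.ext he2)
          subst this
          exact Set.disjoint_left.1 (hdisj' i j hij') hy1 hy2
    · rw [natFinSum_succ0, ← hs, ← hSTu]
      ext x
      simp only [Set.mem_iUnion, Set.mem_union]
      constructor
      · rintro ⟨i, hi⟩
        induction i using Fin.cases with
        | zero => exact Or.inl hi
        | succ i => exact Or.inr (hImU ▸ Set.mem_iUnion.2 ⟨i, hi⟩)
      · rintro (h | h)
        · exact ⟨0, h⟩
        · obtain ⟨i, hi⟩ := Set.mem_iUnion.1 (hImU ▸ h : x ∈ ⋃ i, Im i)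
          exact ⟨i.succ, hi⟩
    · intro i
      induction i using Fin.cases with
      | zero => exact hSo
      | succ i =>
        simp only [Fin.cases_succ, hIm]
        exact (otype_image e (hA'sub i)).trans (hot' i)


end MixedAux

/-- The Hessenberg natural sum of finitely many ordinals is a mixed sum of them, and it is
the largest such mixed sum. -/
theorem natFinSum_isMixedSum_and_largest (n : ℕ) (α : Fin n → Ordinal.{0}) :
    IsMixedSum (natFinSum n α) α ∧
      ∀ γ : Ordinal.{0}, IsMixedSum γ α → γ ≤ natFinSum n α :=
  ⟨MixedAux.mixed_of_natFinSum n α, fun γ h => MixedAux.mixed_le γ α h⟩
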